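/- arXiv:2302.08661 — 5 statements merged into one kernel-verified Lean document; each statement's English description precedes it below -/
import Mathlib

section
/- For all real t > 0 and Δ > 0, defining f(t) := -log t + t - 1, we have f(t + Δ) ≤ (1 - log(min(1, Δ)))·(t - 1)² + Δ. -/
/-!
Write `x = t + Δ`. If `x ≥ 1`, then `f (t + Δ) ≤ Δ` when `t < 1`, and `f (t + Δ) ≤ f t + Δ` with
`f t ≤ (t - 1)²` (from `log t ≥ 1 - 1/t`) when `t ≥ 1`. If `Δ ≤ x < 1`, concavity of `log` on
`[Δ, 1]` together with `Δ log Δ ≥ Δ - 1` gives `-log x ≤ (1 - log Δ)(1 - x)`, and `x log x ≥ x - 1`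
upgrades this to the quadratic bound `f x ≤ (1 - log Δ)(1 - x)²`, while `(1 - x)² ≤ (1 - t)²`.
-/

open Real Set

lemma neg_log_le_one_sub_log_mul_one_sub {a x : ℝ} (ha : 0 < a) (hax : a ≤ x) (hx : x ≤ 1) :
    -log x ≤ (1 - log a) * (1 - x) := by
  -- `log y + (1 - log a) (1 - y)` is concave, vanishes at `1` and is `1 - a + a log a ≥ 0` at `a`.
  have hconc : ConcaveOn ℝ (Ioi 0) fun y ↦ log y + (1 - log a) * (1 - y) := by
    have hlin := ((LinearMap.mulLeft ℝ (log a - 1)).concaveOn (convex_Ioi 0)).add_const (1 - log a)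
    refine strictConcaveOn_log_Ioi.concaveOn.add (hlin.congr fun y _ ↦ ?_)
    simp only [Pi.add_apply, LinearMap.mulLeft_apply]
    ring
  have hseg := hconc.ge_on_segment (mem_Ioi.2 ha) (mem_Ioi.2 one_pos)
    (by rw [segment_eq_Icc (hax.trans hx)]; exact ⟨hax, hx⟩)
  have hleft : 0 ≤ log a + (1 - log a) * (1 - a) := by
    nlinarith [self_sub_one_le_mul_log ha.le]
  simp only [log_one, sub_self, mul_zero, add_zero] at hseg
  linarith [(le_min hleft le_rfl).trans hseg]

lemma neg_log_add_sub_one_le_of_le_one {a x : ℝ} (ha : 0 < a) (hax : a ≤ x) (hx : x ≤ 1) :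
    -log x + x - 1 ≤ (1 - log a) * (1 - x) ^ 2 := by
  have hx0 : 0 < x := ha.trans_le hax
  have hmul : x - 1 ≤ x * log x := self_sub_one_le_mul_log hx0.le
  have hlog := neg_log_le_one_sub_log_mul_one_sub ha hax hx
  calc -log x + x - 1 ≤ (1 - x) * -log x := by nlinarith
    _ ≤ (1 - x) * ((1 - log a) * (1 - x)) := by gcongr
    _ = (1 - log a) * (1 - x) ^ 2 := by ring

lemma neg_log_add_sub_one_le_sq {t : ℝ} (ht : 1 ≤ t) : -log t + t - 1 ≤ (t - 1) ^ 2 := by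
  have ht0 : 0 < t := one_pos.trans_le ht
  have hinv : 1 - t⁻¹ ≤ log t := one_sub_inv_le_log_of_pos ht0
  have hid : t - 1 - (1 - t⁻¹) = (t - 1) ^ 2 / t := by field_simp
  have hdiv : (t - 1) ^ 2 / t ≤ (t - 1) ^ 2 := div_le_self (sq_nonneg _) ht
  linarith

theorem stmt_1 (t Δ : ℝ) (ht : 0 < t) (hΔ : 0 < Δ)
    (f : ℝ → ℝ) (hf : ∀ s, f s = -Real.log s + s - 1) :
    f (t + Δ) ≤ (1 - Real.log (min 1 Δ)) * (t - 1)^2 + Δ := by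
  rw [hf]
  have hC : 1 ≤ 1 - log (min 1 Δ) := by
    linarith [log_nonpos (le_min zero_le_one hΔ.le) (min_le_left 1 Δ)]
  rcases le_or_gt 1 (t + Δ) with hx | hx
  · suffices -log (t + Δ) + t - 1 ≤ (t - 1) ^ 2 by nlinarith [sq_nonneg (t - 1)]
    rcases le_or_gt 1 t with h1 | h1
    · linarith [log_le_log ht (le_add_of_nonneg_right hΔ.le), neg_log_add_sub_one_le_sq h1]
    · nlinarith [log_nonneg hx]
  · rw [min_eq_right (by linarith)] at hC ⊢
    calc -log (t + Δ) + (t + Δ) - 1 ≤ (1 - log Δ) * (1 - (t + Δ)) ^ 2 := by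
          linarith [neg_log_add_sub_one_le_of_le_one hΔ (by linarith) hx.le]
      _ ≤ (1 - log Δ) * (t - 1) ^ 2 + Δ := by
          have hsq : (1 - (t + Δ)) ^ 2 ≤ (t - 1) ^ 2 := by nlinarith
          nlinarith
end

section
/- Let 1 ≤ w ≤ n-1 be integers and f : binom([n], w) → ℝ a function on size-w subsets of [n] = {1,...,n}. Then Var_{i ∼ Unif([n])}[ E_{T ∼ Unif(binom([n],w))}[f(T) | i ∉ T] ] ≤ (w / ((n-1)(n-w))) · Var_{T ∼ Unif(binom([n],w))}[f(T)]. -/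
open scoped Classical
open Finset

lemma pc_filter_not_mem {α : Type*} [DecidableEq α] (s : Finset α) (i : α) (k : ℕ) :
    (s.powersetCard k).filter (fun T => i ∉ T) = (s.erase i).powersetCard k := by
  ext T
  simp only [Finset.mem_filter, Finset.mem_powersetCard, Finset.subset_erase]
  tauto

lemma pc_filter_mem_card {α : Type*} [DecidableEq α] (s : Finset α) (i : α) (hi : i ∈ s) (k : ℕ) :
    ((s.powersetCard (k+1)).filter (fun T => i ∈ T)).card
      = ((s.erase i).powersetCard k).card := by
  refine Finset.card_bij' (fun T _ => T.erase i) (fun U _ => insert i U) ?_ ?_ ?_ ?_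
  · intro T hT
    simp only [mem_filter, mem_powersetCard] at hT
    simp only [mem_powersetCard]
    refine ⟨Finset.erase_subset_erase _ hT.1.1, ?_⟩
    rw [Finset.card_erase_of_mem hT.2, hT.1.2]
    omega
  · intro U hU
    simp only [mem_powersetCard, Finset.subset_erase] at hU
    simp only [mem_filter, mem_powersetCard]
    refine ⟨⟨?_, ?_⟩, Finset.mem_insert_self _ _⟩
    · exact Finset.insert_subset hi hU.1.1
    · rw [Finset.card_insert_of_notMem hU.1.2, hU.2]
  · intro T hT
    simp only [mem_filter] at hT
    exact Finset.insert_erase hT.2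
  · intro U hU
    simp only [mem_powersetCard, Finset.subset_erase] at hU
    exact Finset.erase_insert hU.1.2

theorem stmt_5 (n w : ℕ) (hw : 1 ≤ w) (hwn : w ≤ n - 1) (f : Finset (Fin n) → ℝ) :
    let 𝒯 := Finset.powersetCard w (Finset.univ : Finset (Fin n))
    let μT : ℝ := (∑ T ∈ 𝒯, f T) / 𝒯.card
    let g : Fin n → ℝ := fun i =>
      (∑ T ∈ 𝒯.filter (fun T => i ∉ T), f T) / (𝒯.filter (fun T => i ∉ T)).card
    let μI : ℝ := (∑ i, g i) / n
    (∑ i, (g i - μI)^2) / n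
      ≤ ((w : ℝ) / (((n : ℝ) - 1) * ((n : ℝ) - w))) *
          ((∑ T ∈ 𝒯, (f T - μT)^2) / 𝒯.card) := by
  obtain ⟨m, rfl⟩ : ∃ m, n = m + 2 := ⟨n - 2, by omega⟩
  obtain ⟨v, rfl⟩ : ∃ v, w = v + 1 := ⟨w - 1, by omega⟩
  have hv : v ≤ m := by omega
  intro 𝒯 μT g μI
  have hT_def : 𝒯 = Finset.powersetCard (v+1) (Finset.univ : Finset (Fin (m+2))) := rfl
  have hμT_def : μT = (∑ T ∈ 𝒯, f T) / 𝒯.card := rfl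
  have hg_def : ∀ i, g i
      = (∑ T ∈ 𝒯.filter (fun T => i ∉ T), f T) / (𝒯.filter (fun T => i ∉ T)).card :=
    fun _ => rfl
  have hμI_def : μI = (∑ i, g i) / ((m+2 : ℕ) : ℝ) := rfl
  clear_value 𝒯 μT g μI
  -- cardinalities
  have hTcard : 𝒯.card = (m+2).choose (v+1) := by
    rw [hT_def, Finset.card_powersetCard, Finset.card_univ, Fintype.card_fin]
  have hc1 : ∀ i : Fin (m+2), (𝒯.filter (fun T => i ∉ T)).card = (m+1).choose (v+1) := by
    intro i
    rw [hT_def, pc_filter_not_mem, Finset.card_powersetCard,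
      Finset.card_erase_of_mem (Finset.mem_univ _), Finset.card_univ, Fintype.card_fin]
    congr 1
  have hd : ∀ i : Fin (m+2), (𝒯.filter (fun T => i ∈ T)).card = (m+1).choose v := by
    intro i
    rw [hT_def, pc_filter_mem_card _ _ (Finset.mem_univ i) v, Finset.card_powersetCard,
      Finset.card_erase_of_mem (Finset.mem_univ _), Finset.card_univ, Fintype.card_fin]
    congr 1
  have ha : ∀ i j : Fin (m+2), i ≠ j →
      (𝒯.filter (fun T => i ∈ T ∧ j ∉ T)).card = m.choose v := by
    intro i j hij
    have h1 : 𝒯.filter (fun T => i ∈ T ∧ j ∉ T)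
        = ((Finset.univ.erase j).powersetCard (v+1)).filter (fun T => i ∈ T) := by
      ext T
      simp only [hT_def, Finset.mem_filter, Finset.mem_powersetCard, Finset.subset_erase,
        Finset.subset_univ, true_and]
      tauto
    have hij' : i ∈ (Finset.univ : Finset (Fin (m+2))).erase j :=
      Finset.mem_erase.mpr ⟨hij, Finset.mem_univ _⟩
    rw [h1, pc_filter_mem_card _ _ hij' v, Finset.card_powersetCard,
      Finset.card_erase_of_mem (Finset.mem_erase.mpr ⟨hij, Finset.mem_univ _⟩),
      Finset.card_erase_of_mem (Finset.mem_univ _), Finset.card_univ, Fintype.card_fin]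
    congr 1
  have hb : ∀ i j : Fin (m+2), i ≠ j →
      (𝒯.filter (fun T => i ∈ T ∧ j ∈ T)).card + m.choose v = (m+1).choose v := by
    intro i j hij
    have key := Finset.card_filter_add_card_filter_not
      (s := 𝒯.filter (fun T => i ∈ T)) (p := fun T => j ∈ T)
    rw [Finset.filter_filter, Finset.filter_filter, hd i] at key
    have h2 : (𝒯.filter (fun T => i ∈ T ∧ ¬ j ∈ T)).card = m.choose v := ha i j hij
    rw [h2] at key
    exact key
  -- real abbreviations
  set F : Finset (Fin (m+2)) → ℝ := fun T => f T - μT with hF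
  set h : Fin (m+2) → ℝ := fun i => ∑ T ∈ 𝒯.filter (fun T => i ∈ T), F T with hh
  have hc1pos : 0 < ((m+1).choose (v+1) : ℝ) := by
    exact_mod_cast Nat.choose_pos (by omega : v + 1 ≤ m + 1)
  have hNpos : 0 < ((m+2).choose (v+1) : ℝ) := by
    exact_mod_cast Nat.choose_pos (by omega : v + 1 ≤ m + 2)
  have hNR : ((𝒯.card : ℕ) : ℝ) ≠ 0 := by
    rw [hTcard]; exact ne_of_gt hNpos
  have hF0 : ∑ T ∈ 𝒯, F T = 0 := by
    simp only [hF, Finset.sum_sub_distrib, Finset.sum_const, nsmul_eq_mul, hμT_def]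
    field_simp
    ring
  have hsplit : ∀ i, (∑ T ∈ 𝒯.filter (fun T => i ∉ T), F T) = - h i := by
    intro i
    have h2 := Finset.sum_filter_add_sum_filter_not 𝒯 (fun T => i ∈ T) F
    rw [hF0] at h2
    simp only [hh]
    linarith
  have hsum_h : ∑ i, h i = 0 := by
    simp only [hh]
    have e1 : ∀ i : Fin (m+2), ∑ T ∈ 𝒯.filter (fun T => i ∈ T), F T
        = ∑ T ∈ 𝒯, if i ∈ T then F T else 0 := fun i => Finset.sum_filter _ _
    rw [Finset.sum_congr rfl (fun i _ => e1 i), Finset.sum_comm]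
    have e2 : ∀ T ∈ 𝒯, (∑ i : Fin (m+2), if i ∈ T then F T else 0) = ((v:ℝ)+1) * F T := by
      intro T hT
      rw [Finset.sum_ite_mem, Finset.univ_inter, Finset.sum_const, nsmul_eq_mul]
      have hcard : T.card = v + 1 := (Finset.mem_powersetCard.mp (hT_def ▸ hT)).2
      rw [hcard]
      push_cast
      ring
    rw [Finset.sum_congr rfl e2, ← Finset.mul_sum, hF0, mul_zero]
  have hinner : ∀ T : Finset (Fin (m+2)),
      (∑ i ∈ T, h i) = ∑ i : Fin (m+2), if i ∈ T then h i else 0 := by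
    intro T; rw [Finset.sum_ite_mem, Finset.univ_inter]
  have key1 : ∑ T ∈ 𝒯, (∑ i ∈ T, h i) * F T = ∑ i, h i * h i := by
    have e1 : ∀ T ∈ 𝒯, (∑ i ∈ T, h i) * F T
        = ∑ i : Fin (m+2), if i ∈ T then h i * F T else 0 := by
      intro T _
      rw [hinner T, Finset.sum_mul]
      apply Finset.sum_congr rfl; intro i _
      split_ifs <;> simp
    rw [Finset.sum_congr rfl e1, Finset.sum_comm]
    apply Finset.sum_congr rfl; intro i _
    rw [← Finset.sum_filter, ← Finset.mul_sum]
  have key2 : ∑ T ∈ 𝒯, (∑ i ∈ T, h i)^2 = (m.choose v : ℝ) * ∑ i, h i * h i := by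
    have e1 : ∀ T ∈ 𝒯, (∑ i ∈ T, h i)^2
        = ∑ i : Fin (m+2), ∑ j : Fin (m+2), (if i ∈ T ∧ j ∈ T then h i * h j else 0) := by
      intro T _
      rw [sq, hinner T, Finset.sum_mul_sum]
      apply Finset.sum_congr rfl; intro i _
      apply Finset.sum_congr rfl; intro j _
      by_cases h1 : i ∈ T <;> by_cases h2 : j ∈ T <;> simp [h1, h2]
    rw [Finset.sum_congr rfl e1, Finset.sum_comm]
    have e2 : ∀ i : Fin (m+2),
        (∑ T ∈ 𝒯, ∑ j : Fin (m+2), (if i ∈ T ∧ j ∈ T then h i * h j else 0))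
        = ∑ j : Fin (m+2), ((𝒯.filter (fun T => i ∈ T ∧ j ∈ T)).card : ℝ) * (h i * h j) := by
      intro i
      rw [Finset.sum_comm]
      apply Finset.sum_congr rfl; intro j _
      rw [← Finset.sum_filter, Finset.sum_const, nsmul_eq_mul]
    rw [Finset.sum_congr rfl (fun i _ => e2 i)]
    have e3 : ∀ i : Fin (m+2),
        (∑ j : Fin (m+2), ((𝒯.filter (fun T => i ∈ T ∧ j ∈ T)).card : ℝ) * (h i * h j))
        = (m.choose v : ℝ) * (h i * h i) := by
      intro i
      rw [← Finset.sum_erase_add _ _ (Finset.mem_univ i)]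
      have hcii : (𝒯.filter (fun T => i ∈ T ∧ i ∈ T)).card = (m+1).choose v := by
        rw [← hd i]
        congr 1
        ext T
        simp only [Finset.mem_filter, and_self]
      have e4 : ∀ j ∈ Finset.univ.erase i,
          ((𝒯.filter (fun T => i ∈ T ∧ j ∈ T)).card : ℝ) * (h i * h j)
          = (((m+1).choose v : ℝ) - (m.choose v : ℝ)) * (h i * h j) := by
        intro j hj
        have hji : i ≠ j := fun e => (Finset.mem_erase.mp hj).1 e.symm
        have hcast : ((𝒯.filter (fun T => i ∈ T ∧ j ∈ T)).card : ℝ)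
            = ((m+1).choose v : ℝ) - (m.choose v : ℝ) := by
          have := hb i j hji
          have : ((𝒯.filter (fun T => i ∈ T ∧ j ∈ T)).card : ℝ) + (m.choose v : ℝ)
              = ((m+1).choose v : ℝ) := by exact_mod_cast congrArg (Nat.cast : ℕ → ℝ) this
          linarith
        rw [hcast]
      rw [Finset.sum_congr rfl e4, hcii, ← Finset.mul_sum]
      have esum : ∑ j ∈ Finset.univ.erase i, (h i * h j) = h i * (0 - h i) := by
        rw [← Finset.mul_sum, Finset.sum_erase_eq_sub (Finset.mem_univ i), hsum_h]
      rw [esum]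
      ring
    rw [Finset.sum_congr rfl (fun i _ => e3 i), ← Finset.mul_sum]
  -- Cauchy-Schwarz
  set S : ℝ := ∑ T ∈ 𝒯, F T ^ 2 with hS
  set X : ℝ := ∑ i, h i * h i with hX
  have hXnn : 0 ≤ X := Finset.sum_nonneg (fun i _ => mul_self_nonneg _)
  have hSnn : 0 ≤ S := Finset.sum_nonneg (fun T _ => sq_nonneg _)
  have hCS := Finset.sum_mul_sq_le_sq_mul_sq 𝒯 (fun T => ∑ i ∈ T, h i) F
  rw [key1, key2, ← hS] at hCS
  clear_value F h S X
  have hXS : X ≤ (m.choose v : ℝ) * S := by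
    rcases eq_or_lt_of_le hXnn with h0 | h0
    · rw [← h0]; exact mul_nonneg (Nat.cast_nonneg _) hSnn
    · nlinarith [hCS, h0]
  -- mean minimizes sum of squares
  have hn0 : (0:ℝ) < ((m+2 : ℕ) : ℝ) := by positivity
  have hgsum : ∑ i, (g i - μI) = 0 := by
    rw [Finset.sum_sub_distrib, Finset.sum_const, Finset.card_univ, Fintype.card_fin,
      nsmul_eq_mul, hμI_def]
    field_simp
    ring
  have hmean : ∑ i, (g i - μI)^2 ≤ ∑ i, (g i - μT)^2 := by
    have e : ∑ i, (g i - μT)^2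
        = ∑ i, ((g i - μI)^2 + ((g i - μI) * (2*(μI - μT)) + (μI - μT)^2)) := by
      apply Finset.sum_congr rfl; intro i _; ring
    rw [e, Finset.sum_add_distrib, Finset.sum_add_distrib, ← Finset.sum_mul, hgsum, zero_mul]
    have hnn : (0:ℝ) ≤ ∑ _i : Fin (m+2), (μI - μT)^2 :=
      Finset.sum_nonneg (fun _ _ => sq_nonneg _)
    linarith
  -- g i - μT = - h i / c1
  have hgi : ∀ i, g i - μT = - h i / ((m+1).choose (v+1) : ℝ) := by
    intro i
    have hfs : ∑ T ∈ 𝒯.filter (fun T => i ∉ T), f T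
        = - h i + ((m+1).choose (v+1) : ℝ) * μT := by
      have e : ∑ T ∈ 𝒯.filter (fun T => i ∉ T), f T
          = ∑ T ∈ 𝒯.filter (fun T => i ∉ T), (F T + μT) := by
        apply Finset.sum_congr rfl; intro T _; simp [hF]
      rw [e, Finset.sum_add_distrib, hsplit i, Finset.sum_const, hc1 i, nsmul_eq_mul]
    rw [hg_def i, hfs, hc1 i]
    field_simp
    ring
  have hsum_g : ∑ i, (g i - μT)^2 = X / ((m+1).choose (v+1) : ℝ)^2 := by
    rw [hX, Finset.sum_div]
    apply Finset.sum_congr rfl; intro i _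
    rw [hgi i, div_pow, neg_pow]
    ring
  -- the goal sum equals S
  have hSgoal : ∑ T ∈ 𝒯, (f T - μT)^2 = S := by
    rw [hS]; simp only [hF]
  -- final numeric identity
  have hvR : (v:ℝ) ≤ (m:ℝ) := by exact_mod_cast hv
  have id1R : ((m:ℝ)+1) * (m.choose v : ℝ) = ((m+1).choose (v+1) : ℝ) * ((v:ℝ)+1) := by
    exact_mod_cast congrArg (Nat.cast : ℕ → ℝ) (Nat.add_one_mul_choose_eq m v)
  have id2R : ((m:ℝ)+2) * ((m+1).choose (v+1) : ℝ)
      = ((m+2).choose (v+1) : ℝ) * (((m:ℝ)+1) - (v:ℝ)) := by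
    have hnat : (m+2) * (m+1).choose (v+1) = (m+2).choose (v+1) * (m+1-v) := by
      have h1 := Nat.add_one_mul_choose_eq (m+1) (v+1)
      have h2 := Nat.choose_succ_right_eq (m+2) (v+1)
      rw [h1, h2]
      congr 1
      omega
    have := congrArg (Nat.cast : ℕ → ℝ) hnat
    push_cast [Nat.cast_sub (by omega : v ≤ m + 1)] at this
    push_cast
    linarith
  have hfinal : ((m.choose v : ℝ) * S) / (((m+1).choose (v+1):ℝ)^2 * ((m:ℝ)+2))
      = (((v:ℝ)+1) / ((((m:ℝ)+2) - 1) * (((m:ℝ)+2) - ((v:ℝ)+1))))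
        * (S / ((m+2).choose (v+1) : ℝ)) := by
    rw [div_mul_div_comm, div_eq_div_iff]
    · linear_combination (S * ((m+2).choose (v+1) : ℝ) * (((m:ℝ)+1) - (v:ℝ))) * id1R
        - (S * ((m+1).choose (v+1) : ℝ) * ((v:ℝ)+1)) * id2R
    · positivity
    · have h1 : (0:ℝ) < ((m:ℝ)+2) - 1 := by linarith
      have h2 : (0:ℝ) < ((m:ℝ)+2) - ((v:ℝ)+1) := by linarith
      positivity
  -- assemble
  rw [hTcard]
  push_cast
  calc (∑ i, (g i - μI)^2) / ((m:ℝ)+2)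
      ≤ (∑ i, (g i - μT)^2) / ((m:ℝ)+2) := by
        apply (div_le_div_iff_of_pos_right (by positivity)).mpr hmean
    _ = (X / ((m+1).choose (v+1) : ℝ)^2) / ((m:ℝ)+2) := by rw [hsum_g]
    _ ≤ (((m.choose v : ℝ) * S) / ((m+1).choose (v+1) : ℝ)^2) / ((m:ℝ)+2) := by
        apply (div_le_div_iff_of_pos_right (by positivity)).mpr
        exact (div_le_div_iff_of_pos_right (pow_pos hc1pos 2)).mpr hXS
    _ = ((m.choose v : ℝ) * S) / (((m+1).choose (v+1):ℝ)^2 * ((m:ℝ)+2)) := by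
        rw [div_div]
    _ = _ := hfinal
end

section
/- For any τ > 0 and a, b, c ∈ [0,1] satisfying |b - a| ≤ max(τ², τ·√(a(1-a))) and |c - b| ≤ max(τ², τ·√(b(1-b))), it holds that |c - a| ≤ 3·max(τ², τ·√(a(1-a))). -/
/-! The map `x ↦ x (1 - x)` is `1`-Lipschitz on `[0, 1]`, so moving from `a` to `b` raises the
variance term by at most `M = max (τ²) (τ √(a (1 - a)))`. By subadditivity of the square root,
and since `τ ≤ √M`, the tolerance at `b` is then at most `2M`; the triangle inequality gives
`|c - a| ≤ 2M + M`. -/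

open Real

noncomputable def tolerance (τ x : ℝ) : ℝ := max (τ ^ 2) (τ * √x)

lemma sqrt_add_le_sqrt_add_sqrt {x y : ℝ} (hx : 0 ≤ x) (hy : 0 ≤ y) :
    √(x + y) ≤ √x + √y := by
  rw [sqrt_le_iff]
  refine ⟨by positivity, ?_⟩
  nlinarith [sq_sqrt hx, sq_sqrt hy, mul_nonneg (sqrt_nonneg x) (sqrt_nonneg y)]

lemma mul_one_sub_le_add_abs_sub {a b : ℝ} (ha : a ∈ Set.Icc (0 : ℝ) 1)
    (hb : b ∈ Set.Icc (0 : ℝ) 1) : b * (1 - b) ≤ a * (1 - a) + |b - a| := by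
  have hbound : |1 - a - b| ≤ 1 :=
    abs_le.2 ⟨by linarith [ha.2, hb.2], by linarith [ha.1, hb.1]⟩
  calc b * (1 - b) = a * (1 - a) + (b - a) * (1 - a - b) := by ring
    _ ≤ a * (1 - a) + |b - a| * |1 - a - b| := by
        rw [← abs_mul]
        exact add_le_add_right (le_abs_self _) _
    _ ≤ a * (1 - a) + |b - a| := by
        gcongr
        exact mul_le_of_le_one_right (abs_nonneg _) hbound

namespace tolerance

variable {τ x y : ℝ}

lemma sq_le : τ ^ 2 ≤ tolerance τ x := le_max_left _ _

lemma mul_sqrt_le : τ * √x ≤ tolerance τ x := le_max_right _ _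

lemma nonneg : 0 ≤ tolerance τ x := (sq_nonneg τ).trans sq_le

lemma mul_sqrt_self_le (hτ : 0 ≤ τ) : τ * √(tolerance τ x) ≤ tolerance τ x := by
  have hτ_le : τ ≤ √(tolerance τ x) := by
    simpa [sqrt_sq hτ] using sqrt_le_sqrt (sq_le (τ := τ) (x := x))
  calc τ * √(tolerance τ x) ≤ √(tolerance τ x) * √(tolerance τ x) := by gcongr
    _ = tolerance τ x := mul_self_sqrt nonneg

lemma le_two_mul (hτ : 0 ≤ τ) (hy : 0 ≤ y) (hxy : x ≤ y + tolerance τ y) :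
    tolerance τ x ≤ 2 * tolerance τ y := by
  refine max_le (by linarith [sq_le (τ := τ) (x := y), nonneg (τ := τ) (x := y)]) ?_
  calc τ * √x ≤ τ * (√y + √(tolerance τ y)) := by
        gcongr
        exact (sqrt_le_sqrt hxy).trans (sqrt_add_le_sqrt_add_sqrt hy nonneg)
    _ = τ * √y + τ * √(tolerance τ y) := mul_add _ _ _
    _ ≤ 2 * tolerance τ y := by
        linarith [mul_sqrt_le (τ := τ) (x := y), mul_sqrt_self_le (x := y) hτ]

end tolerance

theorem stmt_14_general (τ a b c : ℝ) (hτ : 0 < τ)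
    (ha : a ∈ Set.Icc (0:ℝ) 1) (hb : b ∈ Set.Icc (0:ℝ) 1)
    (hab : |b - a| ≤ max (τ^2) (τ * Real.sqrt (a * (1 - a))))
    (hbc : |c - b| ≤ max (τ^2) (τ * Real.sqrt (b * (1 - b)))) :
    |c - a| ≤ 3 * max (τ^2) (τ * Real.sqrt (a * (1 - a))) := by
  change |b - a| ≤ tolerance τ (a * (1 - a)) at hab
  change |c - b| ≤ tolerance τ (b * (1 - b)) at hbc
  change _ ≤ 3 * tolerance τ (a * (1 - a))
  have hvar : b * (1 - b) ≤ a * (1 - a) + tolerance τ (a * (1 - a)) :=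
    (mul_one_sub_le_add_abs_sub ha hb).trans (by linarith)
  have hbc' : |c - b| ≤ 2 * tolerance τ (a * (1 - a)) :=
    hbc.trans (tolerance.le_two_mul hτ.le (mul_nonneg ha.1 (by linarith [ha.2])) hvar)
  linarith [abs_sub_le c b a]

theorem stmt_14 (τ a b c : ℝ) (hτ : 0 < τ)
    (ha : a ∈ Set.Icc (0:ℝ) 1) (hb : b ∈ Set.Icc (0:ℝ) 1) (hc : c ∈ Set.Icc (0:ℝ) 1)
    (hab : |b - a| ≤ max (τ^2) (τ * Real.sqrt (a * (1 - a))))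
    (hbc : |c - b| ≤ max (τ^2) (τ * Real.sqrt (b * (1 - b)))) :
    |c - a| ≤ 3 * max (τ^2) (τ * Real.sqrt (a * (1 - a))) :=
  stmt_14_general τ a b c hτ ha hb hab hbc
end

section
/- Let x₁, ..., x_k be {0,1}-valued random variables such that for some p < 1 and every subset S ⊆ [k], Pr[∀ i ∈ S, xᵢ = 1] ≤ p^{|S|}. Then for any δ > 0, Pr[Σᵢ xᵢ ≥ (1+δ)·p·k] ≤ exp(-δ²·p·k / (2+δ)). -/
open MeasureTheory
open scoped ENNReal

lemma log_lower (d : ℝ) (hd : 0 ≤ d) : 2*d/(2+d) ≤ Real.log (1+d) := by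
  have key : MonotoneOn (fun x : ℝ => Real.log (1+x) - 2*x/(2+x)) (Set.Ici 0) := by
    have hderiv : ∀ x ∈ interior (Set.Ici (0:ℝ)),
        HasDerivAt (fun x : ℝ => Real.log (1+x) - 2*x/(2+x))
          (1/(1+x) - 4/(2+x)^2) x := by
      intro x hx
      rw [interior_Ici] at hx
      have hx0 : (0:ℝ) < x := hx
      have h1 : (1:ℝ) + x ≠ 0 := by positivity
      have h2 : (2:ℝ) + x ≠ 0 := by positivity
      have d1 : HasDerivAt (fun x : ℝ => Real.log (1+x)) (1/(1+x)) x := by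
        have := ((hasDerivAt_id x).const_add (1:ℝ)).log h1
        simpa using this
      have d2 : HasDerivAt (fun x : ℝ => 2*x/(2+x)) (4/(2+x)^2) x := by
        have := (((hasDerivAt_id x).const_mul (2:ℝ)).div
          ((hasDerivAt_id x).const_add (2:ℝ)) h2)
        exact this.congr_deriv (by simp only [id]; ring)
      exact d1.sub d2
    apply monotoneOn_of_hasDerivWithinAt_nonneg (convex_Ici 0)
    · apply ContinuousOn.sub
      · apply ContinuousOn.log (by fun_prop)
        intro x hx
        have : (0:ℝ) ≤ x := hx
        positivity
      · apply ContinuousOn.div (by fun_prop) (by fun_prop)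
        intro x hx
        have : (0:ℝ) ≤ x := hx
        positivity
    · exact fun x hx => (hderiv x hx).hasDerivWithinAt
    · intro x hx
      rw [interior_Ici] at hx
      have hx0 : (0:ℝ) < x := hx
      rw [sub_nonneg, div_le_div_iff₀ (by positivity) (by positivity)]
      nlinarith
  have := key (Set.self_mem_Ici) (Set.mem_Ici.2 hd) hd
  simpa using this

theorem stmt_16 {Ω : Type*} [MeasurableSpace Ω] (μ : Measure Ω) [IsProbabilityMeasure μ]
    (k : ℕ) (x : Fin k → Ω → ℝ) (hmeas : ∀ i, Measurable (x i))
    (h01 : ∀ i ω, x i ω = 0 ∨ x i ω = 1)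
    (p : ℝ) (hp : p < 1)
    (hjoint : ∀ S : Finset (Fin k),
      μ {ω | ∀ i ∈ S, x i ω = 1} ≤ ENNReal.ofReal (p ^ S.card))
    (δ : ℝ) (hδ : 0 < δ) :
    μ {ω | (1 + δ) * p * k ≤ ∑ i, x i ω}
      ≤ ENNReal.ofReal (Real.exp (-(δ^2 * p * k) / (2 + δ))) := by
  have hknn : (0:ℝ) ≤ (k:ℝ) := Nat.cast_nonneg k
  rcases le_or_gt (p * k) 0 with hpk | hpk
  · -- easy branch: RHS ≥ 1
    refine le_trans prob_le_one ?_
    apply ENNReal.one_le_ofReal.2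
    apply Real.one_le_exp
    apply div_nonneg _ (by linarith)
    nlinarith [sq_nonneg δ]
  · -- main branch
    have hp0 : 0 < p := by nlinarith
    have hxnn : ∀ i ω, 0 ≤ x i ω := by
      intro i ω; rcases h01 i ω with h | h <;> rw [h] <;> norm_num
    set t := Real.log (1+δ) with ht_def
    have ht : 0 < t := Real.log_pos (by linarith)
    have hexp_t : Real.exp t = 1 + δ := Real.exp_log (by linarith)
    set a := (1 + δ) * p * (k:ℝ) with ha_def
    -- pointwise expansion
    have hpoint : ∀ ω, Real.exp (t * ∑ i, x i ω)
        = ∑ S ∈ (Finset.univ : Finset (Fin k)).powerset,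
            δ ^ S.card * ∏ i ∈ S, x i ω := by
      intro ω
      rw [Finset.mul_sum, Real.exp_sum]
      have hfac : ∀ i ∈ Finset.univ, Real.exp (t * x i ω) = δ * x i ω + 1 := by
        intro i _
        rcases h01 i ω with h | h <;> rw [h] <;> simp [hexp_t] <;> ring
      rw [Finset.prod_congr rfl hfac, Finset.prod_add]
      apply Finset.sum_congr rfl
      intro S _
      simp [Finset.prod_mul_distrib, Finset.prod_const]
    -- indicator bound
    have hind : ∀ S : Finset (Fin k),
        ∫⁻ ω, ENNReal.ofReal (∏ i ∈ S, x i ω) ∂μ ≤ ENNReal.ofReal (p ^ S.card) := by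
      intro S
      have hset : MeasurableSet {ω | ∀ i ∈ S, x i ω = 1} := by
        have : {ω | ∀ i ∈ S, x i ω = 1} = ⋂ i ∈ S, (x i) ⁻¹' {1} := by
          ext ω; simp
        rw [this]
        exact MeasurableSet.biInter (Set.to_countable _)
          (fun i _ => (hmeas i) (measurableSet_singleton 1))
      have heq : ∀ ω, ENNReal.ofReal (∏ i ∈ S, x i ω)
          = Set.indicator {ω | ∀ i ∈ S, x i ω = 1} (fun _ => (1:ℝ≥0∞)) ω := by
        intro ω
        by_cases h : ∀ i ∈ S, x i ω = 1
        · rw [Set.indicator_of_mem (show ω ∈ {ω | ∀ i ∈ S, x i ω = 1} from h),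
            Finset.prod_congr rfl h]
          simp
        · rw [Set.indicator_of_notMem
            (show ω ∉ {ω | ∀ i ∈ S, x i ω = 1} from h)]
          push_neg at h
          obtain ⟨i, hi, hne⟩ := h
          have hz : x i ω = 0 := (h01 i ω).resolve_right hne
          rw [Finset.prod_eq_zero hi hz]
          simp
      calc ∫⁻ ω, ENNReal.ofReal (∏ i ∈ S, x i ω) ∂μ
          = ∫⁻ ω, Set.indicator {ω | ∀ i ∈ S, x i ω = 1} (fun _ => (1:ℝ≥0∞)) ω ∂μ := by
            exact lintegral_congr heq
        _ = μ {ω | ∀ i ∈ S, x i ω = 1} := by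
            exact lintegral_indicator_one hset
        _ ≤ ENNReal.ofReal (p ^ S.card) := hjoint S
    -- MGF bound
    have hmeassum : Measurable fun ω => ∑ i, x i ω :=
      Finset.measurable_sum _ (fun i _ => hmeas i)
    have hg : Measurable fun ω => ENNReal.ofReal (Real.exp (t * ∑ i, x i ω)) :=
      (Real.measurable_exp.comp (measurable_const.mul hmeassum)).ennreal_ofReal
    have hmgf : ∫⁻ ω, ENNReal.ofReal (Real.exp (t * ∑ i, x i ω)) ∂μ
        ≤ ENNReal.ofReal ((1 + δ * p) ^ k) := by
      calc ∫⁻ ω, ENNReal.ofReal (Real.exp (t * ∑ i, x i ω)) ∂μ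
          = ∫⁻ ω, ∑ S ∈ (Finset.univ : Finset (Fin k)).powerset,
              ENNReal.ofReal (δ ^ S.card * ∏ i ∈ S, x i ω) ∂μ := by
            apply lintegral_congr
            intro ω
            rw [hpoint ω, ENNReal.ofReal_sum_of_nonneg]
            intro S _
            have : 0 ≤ ∏ i ∈ S, x i ω := Finset.prod_nonneg (fun i _ => hxnn i ω)
            positivity
        _ = ∑ S ∈ (Finset.univ : Finset (Fin k)).powerset,
              ∫⁻ ω, ENNReal.ofReal (δ ^ S.card * ∏ i ∈ S, x i ω) ∂μ := by
            apply lintegral_finset_sum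
            intro S _
            exact (measurable_const.mul (Finset.measurable_prod _ fun i _ => hmeas i)).ennreal_ofReal
        _ = ∑ S ∈ (Finset.univ : Finset (Fin k)).powerset,
              ENNReal.ofReal (δ ^ S.card) * ∫⁻ ω, ENNReal.ofReal (∏ i ∈ S, x i ω) ∂μ := by
            apply Finset.sum_congr rfl
            intro S _
            rw [← lintegral_const_mul _
              ((Finset.measurable_prod _ fun i _ => hmeas i)).ennreal_ofReal]
            apply lintegral_congr
            intro ω
            rw [← ENNReal.ofReal_mul (by positivity)]
        _ ≤ ∑ S ∈ (Finset.univ : Finset (Fin k)).powerset,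
              ENNReal.ofReal (δ ^ S.card) * ENNReal.ofReal (p ^ S.card) := by
            exact Finset.sum_le_sum (fun S _ => mul_le_mul_right (hind S) _)
        _ = ENNReal.ofReal (∑ S ∈ (Finset.univ : Finset (Fin k)).powerset,
              (δ * p) ^ S.card) := by
            rw [ENNReal.ofReal_sum_of_nonneg (fun S _ => by positivity)]
            apply Finset.sum_congr rfl
            intro S _
            rw [← ENNReal.ofReal_mul (by positivity), mul_pow]
        _ = ENNReal.ofReal ((1 + δ * p) ^ k) := by
            congr 1
            have hpa := Finset.prod_add (fun _ : Fin k => δ * p)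
              (fun _ => (1:ℝ)) Finset.univ
            simp only [Finset.prod_const, one_pow, mul_one,
              Finset.card_univ, Fintype.card_fin] at hpa
            rw [← hpa]
            ring
    -- Markov
    have hexp_pos : (0:ℝ) < Real.exp (t * a) := Real.exp_pos _
    have hmarkov : ENNReal.ofReal (Real.exp (t * a)) * μ {ω | a ≤ ∑ i, x i ω}
        ≤ ∫⁻ ω, ENNReal.ofReal (Real.exp (t * ∑ i, x i ω)) ∂μ := by
      refine le_trans ?_ (mul_meas_ge_le_lintegral₀ hg.aemeasurable
        (ENNReal.ofReal (Real.exp (t * a))))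
      apply mul_le_mul_right
      apply measure_mono
      intro ω hω
      exact ENNReal.ofReal_le_ofReal (Real.exp_le_exp.2
        (mul_le_mul_of_nonneg_left hω ht.le))
    have hdiv : μ {ω | a ≤ ∑ i, x i ω}
        ≤ ENNReal.ofReal ((1 + δ * p) ^ k) / ENNReal.ofReal (Real.exp (t * a)) := by
      rw [ENNReal.le_div_iff_mul_le (Or.inl (by simp [hexp_pos]))
        (Or.inl ENNReal.ofReal_ne_top)]
      rw [mul_comm]
      exact le_trans hmarkov hmgf
    refine le_trans hdiv ?_
    rw [← ENNReal.ofReal_div_of_pos hexp_pos]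
    apply ENNReal.ofReal_le_ofReal
    -- real inequality
    have h1 : (1 + δ * p) ^ k ≤ Real.exp ((k:ℝ) * (δ * p)) := by
      rw [Real.exp_nat_mul]
      exact pow_le_pow_left₀ (by positivity) (Real.add_one_le_exp (δ * p) |>.trans_eq' (by ring)) k
    have h2 : (1 + δ * p) ^ k / Real.exp (t * a)
        ≤ Real.exp ((k:ℝ) * (δ * p)) / Real.exp (t * a) := by
      gcongr
    refine le_trans h2 ?_
    rw [← Real.exp_sub]
    apply Real.exp_le_exp.2
    -- exponent inequality
    have tlb : 2 * δ / (2 + δ) ≤ t := log_lower δ hδ.le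
    have h2δ : (0:ℝ) < 2 + δ := by linarith
    have t2 : 2 * δ ≤ t * (2 + δ) := (div_le_iff₀ h2δ).1 tlb
    rw [ha_def, le_div_iff₀ h2δ]
    nlinarith [mul_le_mul_of_nonneg_right t2
      (show (0:ℝ) ≤ (1+δ)*(p*(k:ℝ)) by positivity), hpk, hδ, hp0]
end

section
/- Let X be a finite set, w ≤ n positive integers, m := ⌊n/w⌋, ψ : X^w → ℝ, D a probability distribution on X, and f : ℝ → ℝ convex. Define ψ̄(S) := E_{S' ∼ uniform size-w sub-multiset of S}[ψ(S')] for S ∈ Xⁿ. Then E_{S ∼ Dⁿ}[f(ψ̄(S))] ≤ E_{S⁽¹⁾,...,S⁽ᵐ⁾ i.i.d. ∼ D^w}[ f( (1/m)·Σᵢ ψ(S⁽ⁱ⁾) ) ]. -/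
open Finset Function
open scoped BigOperators

/-!
Averaging over the permutations `π` of `Fin n`, the restriction of `π` to each of `m` disjoint
blocks of size `w` is a uniformly distributed embedding `Fin w ↪ Fin n`, so `ψbar S` is the
`π`-average of the block mean `(1/m) ∑ᵢ ψ(S on block i of π)`. Jensen's inequality moves `f`
inside this average, and for each fixed `π` the disjoint blocks of `S ∼ Dⁿ` are `m` independent
samples from `D^w`.
-/

theorem ConvexOn.map_expect_le {ι : Type*} {s : Set ℝ} {f : ℝ → ℝ} (hf : ConvexOn ℝ s f)
    {t : Finset ι} (ht : t.Nonempty) {p : ι → ℝ} (hp : ∀ i ∈ t, p i ∈ s) :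
    f (𝔼 i ∈ t, p i) ≤ 𝔼 i ∈ t, f (p i) := by
  have hcard : (0 : ℝ) < #t := by exact_mod_cast ht.card_pos
  simpa [expect_eq_sum_div_card, div_eq_inv_mul, mul_sum, sum_const, nsmul_eq_mul, hcard.ne']
    using hf.map_sum_le (t := t) (w := fun _ => (#t : ℝ)⁻¹) (fun _ _ => by positivity)
      (by simp [sum_const, hcard.ne']) hp

section ProductWeights

variable {X : Type*} [Fintype X] {D : X → ℝ}

theorem sum_prod_eq_one (hD1 : ∑ x, D x = 1) (κ : Type*) [Fintype κ] [DecidableEq κ] :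
    ∑ U : κ → X, ∏ k, D (U k) = 1 := by
  rw [← Fintype.prod_sum (fun _ x => D x)]
  simp [hD1]

variable {ι κ : Type*} [Fintype ι] [DecidableEq ι] [Fintype κ] [DecidableEq κ]

theorem sum_prod_mul_comp_inl (hD1 : ∑ x, D x = 1) (F : (ι → X) → ℝ) :
    ∑ S : ι ⊕ κ → X, (∏ k, D (S k)) * F (S ∘ Sum.inl) = ∑ T : ι → X, (∏ i, D (T i)) * F T := by
  rw [← (Equiv.sumArrowEquivProdArrow ι κ X).symm.sum_comp, Fintype.sum_prod_type]
  refine sum_congr rfl fun T _ => ?_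
  calc _ = ∑ U : κ → X, (∏ i, D (T i)) * F T * ∏ k, D (U k) := by
        refine sum_congr rfl fun U _ => ?_
        rw [Fintype.prod_sum_type]
        exact mul_right_comm _ _ _
    _ = _ := by rw [← mul_sum, sum_prod_eq_one hD1, mul_one]

theorem sum_prod_mul_comp_embedding (hD1 : ∑ x, D x = 1) (e : ι ↪ κ) (F : (ι → X) → ℝ) :
    ∑ S : κ → X, (∏ k, D (S k)) * F (S ∘ e) = ∑ T : ι → X, (∏ i, D (T i)) * F T := by
  classical
  let σ : ι ⊕ {k // k ∉ Set.range e} ≃ κ :=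
    (Equiv.sumCongr (Equiv.ofInjective e e.injective) (Equiv.refl _)).trans (Equiv.sumCompl _)
  rw [← sum_prod_mul_comp_inl (κ := {k // k ∉ Set.range e}) hD1 F]
  refine Fintype.sum_equiv (σ.arrowCongr (Equiv.refl X)).symm _ _ fun S => ?_
  rw [← σ.prod_comp]
  rfl

theorem sum_prod_prod_mul_comp_embedding {ι' : Type*} [Fintype ι'] [DecidableEq ι']
    (hD1 : ∑ x, D x = 1) (e : ι × ι' ↪ κ) (F : (ι → ι' → X) → ℝ) :
    ∑ S : κ → X, (∏ k, D (S k)) * F (fun i j => S (e (i, j)))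
      = ∑ G : ι → ι' → X, (∏ i, ∏ j, D (G i j)) * F G := by
  refine (sum_prod_mul_comp_embedding hD1 e (fun T => F (Function.curry T))).trans ?_
  refine Fintype.sum_equiv (Equiv.curry ι ι' X) _ _ fun T => ?_
  rw [Fintype.prod_prod_type]
  rfl

end ProductWeights

theorem expect_perm_trans_eq_expect {α β M : Type*} [Fintype α] [DecidableEq α] [Fintype β]
    [DecidableEq β] [AddCommMonoid M] [Module ℚ≥0 M] (u : α ↪ β) (F : (α ↪ β) → M) :
    𝔼 π : Equiv.Perm β, F (u.trans π.toEmbedding) = 𝔼 g : α ↪ β, F g := by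
  have : Nonempty (α ↪ β) := ⟨u⟩
  have hinv : ∀ g : α ↪ β, 𝔼 π : Equiv.Perm β, F (g.trans π.toEmbedding)
      = 𝔼 π : Equiv.Perm β, F (u.trans π.toEmbedding) := by
    intro g
    -- any two embeddings differ by a permutation, which reindexes the average over `π`
    obtain ⟨ρ, hρ⟩ := Equiv.Perm.exists_extending_pair u g u.injective g.injective
    refine Fintype.expect_equiv (Equiv.mulRight ρ) _ _ fun π => ?_
    congr 1
    ext a
    simp [hρ]
  calc 𝔼 π : Equiv.Perm β, F (u.trans π.toEmbedding)
      = 𝔼 g : α ↪ β, 𝔼 π : Equiv.Perm β, F (g.trans π.toEmbedding) := by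
        simp only [hinv, Fintype.expect_const]
    _ = 𝔼 π : Equiv.Perm β, 𝔼 g : α ↪ β, F (g.trans π.toEmbedding) := expect_comm _ _ _
    _ = 𝔼 _π : Equiv.Perm β, 𝔼 g : α ↪ β, F g := by
        refine expect_congr rfl fun π _ => ?_
        exact Fintype.expect_equiv (Equiv.embeddingCongr (Equiv.refl α) π) _ _ fun g => rfl
    _ = 𝔼 g : α ↪ β, F g := Fintype.expect_const _

theorem expect_embedding_eq_expect_perm_expect {ι α β M : Type*} [Fintype ι] [Nonempty ι]
    [Fintype α] [DecidableEq α] [Fintype β] [DecidableEq β] [AddCommMonoid M] [Module ℚ≥0 M]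
    (E : ι × α ↪ β) (Φ : (α ↪ β) → M) :
    𝔼 g : α ↪ β, Φ g
      = 𝔼 π : Equiv.Perm β, 𝔼 i : ι, Φ ((Embedding.sectR i α).trans (E.trans π.toEmbedding)) := by
  rw [expect_comm]
  refine (Fintype.expect_const _).symm.trans (expect_congr rfl fun i _ => ?_)
  exact (expect_perm_trans_eq_expect ((Embedding.sectR i α).trans E) Φ).symm

theorem stmt_18 {X : Type*} [Fintype X] (w n : ℕ) (hw : 0 < w) (hwn : w ≤ n)
    (ψ : (Fin w → X) → ℝ)
    (D : X → ℝ) (hD0 : ∀ x, 0 ≤ D x) (hD1 : ∑ x, D x = 1)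
    (f : ℝ → ℝ) (hf : ConvexOn ℝ Set.univ f) :
    let m := n / w
    let ψbar : (Fin n → X) → ℝ := fun S =>
      (∑ g : Fin w ↪ Fin n, ψ (fun j => S (g j))) / (Fintype.card (Fin w ↪ Fin n))
    (∑ S : Fin n → X, (∏ i, D (S i)) * f (ψbar S))
      ≤ ∑ G : Fin m → (Fin w → X),
          (∏ i, ∏ j, D (G i j)) * f ((∑ i, ψ (G i)) / m) := by
  classical
  intro m ψbar
  have : Nonempty (Fin m) := ⟨⟨0, Nat.div_pos hwn hw⟩⟩
  obtain ⟨E⟩ : Nonempty (Fin m × Fin w ↪ Fin n) :=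
    Embedding.nonempty_of_card_le (by simpa using Nat.div_mul_le_self n w)
  have hmean (G : Fin m → Fin w → X) : (∑ i, ψ (G i)) / m = 𝔼 i, ψ (G i) := by
    rw [Fintype.expect_eq_sum_div_card, Fintype.card_fin]
  have hψbar (S : Fin n → X) :
      ψbar S = 𝔼 π : Equiv.Perm (Fin n), 𝔼 i, ψ (fun j => S (π (E (i, j)))) :=
    (Fintype.expect_eq_sum_div_card _).symm.trans (expect_embedding_eq_expect_perm_expect E _)
  simp only [hψbar, hmean]
  calc ∑ S : Fin n → X, (∏ k, D (S k)) *
        f (𝔼 π : Equiv.Perm (Fin n), 𝔼 i, ψ (fun j => S (π (E (i, j)))))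
      ≤ ∑ S : Fin n → X, (∏ k, D (S k)) *
        𝔼 π : Equiv.Perm (Fin n), f (𝔼 i, ψ (fun j => S (π (E (i, j))))) := by
        gcongr with S
        · exact prod_nonneg fun k _ => hD0 (S k)
        · exact hf.map_expect_le univ_nonempty fun _ _ => Set.mem_univ _
    _ = 𝔼 π : Equiv.Perm (Fin n), ∑ S : Fin n → X, (∏ k, D (S k)) *
        f (𝔼 i, ψ (fun j => S (π (E (i, j))))) := by
        simp only [mul_expect]
        exact (expect_sum_comm _ _ _).symm
    _ = 𝔼 _π : Equiv.Perm (Fin n), ∑ G : Fin m → Fin w → X,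
        (∏ i, ∏ j, D (G i j)) * f (𝔼 i, ψ (G i)) :=
        expect_congr rfl fun π _ => sum_prod_prod_mul_comp_embedding hD1 (E.trans π.toEmbedding)
          (fun G => f (𝔼 i, ψ (G i)))
    _ = _ := Fintype.expect_const _
end
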